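/- In CR, the term g ⌜g⌝ reduces to itself in one or more steps (i.e., g ⌜g⌝ ⇒⁺ g ⌜g⌝), where g = S (K value_term) (S (K f) I) and f = S app lift (with appropriate type subscripts). -/
import Mathlib


inductive Ty : Type
  | bool | unit | term
  | arrow : Ty → Ty → Ty
deriving DecidableEq

inductive Exp : Type
  | I : Ty → Exp
  | K : Ty → Ty → Exp
  | S : Ty → Ty → Ty → Exp
  | value : Ty → Exp
  | lift : Exp
  | app : Exp
  | ap : Exp → Exp → Exp
  | quot : Exp → Exp
deriving DecidableEq

/-- Typing rules of Combinatory ReFLect (Figure 1). -/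
inductive HasType : Exp → Ty → Prop
  | I (σ) : HasType (.I σ) (.arrow σ σ)
  | K (σ τ) : HasType (.K σ τ) (.arrow σ (.arrow τ σ))
  | S (σ τ υ) : HasType (.S σ τ υ)
      (.arrow (.arrow σ (.arrow τ υ)) (.arrow (.arrow σ τ) (.arrow σ υ)))
  | value (σ) : HasType (.value σ) (.arrow .term σ)
  | lift : HasType .lift (.arrow .term .term)
  | app : HasType .app (.arrow .term (.arrow .term .term))
  | ap {e₁ e₂ σ τ} : HasType e₁ (.arrow σ τ) → HasType e₂ σ → HasType (.ap e₁ e₂) τ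
  | quot {e σ} : HasType e σ → HasType (.quot e) .term

/-- Single-step reduction of CR (Figure 2), closed under congruence. -/
inductive Step : Exp → Exp → Prop
  | I {σ e} : Step (.ap (.I σ) e) e
  | K {σ τ e₁ e₂} : Step (.ap (.ap (.K σ τ) e₁) e₂) e₁
  | S {σ τ υ e₁ e₂ e₃} :
      Step (.ap (.ap (.ap (.S σ τ υ) e₁) e₂) e₃) (.ap (.ap e₁ e₃) (.ap e₂ e₃))
  | value {σ e} : HasType e σ → Step (.ap (.value σ) (.quot e)) e
  | lift {s} : Step (.ap .lift (.quot s)) (.quot (.quot s))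
  | app {e₁ e₂ τ} : HasType (.ap e₁ e₂) τ →
      Step (.ap (.ap .app (.quot e₁)) (.quot e₂)) (.quot (.ap e₁ e₂))
  | apL {a a' b} : Step a a' → Step (.ap a b) (.ap a' b)
  | apR {a b b'} : Step b b' → Step (.ap a b) (.ap a b')

/-- Reflexive-transitive (congruent) closure of reduction. -/
def Reduces : Exp → Exp → Prop := Relation.ReflTransGen Step

/-- Reduction in one or more steps. -/
def ReducesPlus : Exp → Exp → Prop := Relation.TransGen Step

/-- f = S_{term,term,term} app lift -/
def fTerm : Exp := .ap (.ap (.S .term .term .term) .app) .lift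

/-- g = S (K value_term) (S (K f) I), with appropriate type subscripts. -/
def gTerm : Exp :=
  .ap (.ap (.S .term .term .term) (.ap (.K (.arrow .term .term) .term) (.value .term)))
      (.ap (.ap (.S .term .term .term) (.ap (.K (.arrow .term .term) .term) fTerm)) (.I .term))

/-- g ⌜g⌝ reduces to itself in one or more steps. -/
theorem g_cycle : ReducesPlus (.ap gTerm (.quot gTerm)) (.ap gTerm (.quot gTerm)) := by
  have hf : HasType fTerm (.arrow .term .term) := .ap (.ap (.S _ _ _) .app) .lift
  have hg : HasType gTerm (.arrow .term .term) :=
    .ap (.ap (.S _ _ _) (.ap (.K _ _) (.value _)))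
      (.ap (.ap (.S _ _ _) (.ap (.K _ _) hf)) (.I _))
  have hgg : HasType (.ap gTerm (.quot gTerm)) .term := .ap hg (.quot hg)
  show Relation.TransGen Step _ _
  refine .head .S ?_
  refine .head (.apL .K) ?_
  refine .head (.apR .S) ?_
  refine .head (.apR (.apL .K)) ?_
  refine .head (.apR (.apR .I)) ?_
  refine .head (.apR .S) ?_
  refine .head (.apR (.apR .lift)) ?_
  refine .head (.apR (.app hgg)) ?_
  exact .single (.value hgg)
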